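/- Let B be a finite type with |B| ≥ 2, let C be a finite type, let H be a subgroup of Perm C acting on C in the natural way, and let G = P((ℤ → B), H). (1) If ℓ is the derived length of H, i.e. the ℓ-th term of the derived series of H is trivial and the (ℓ−1)-st is not, then the derived length of G is ℓ + 1: the (ℓ+1)-st term of the derived series of G is trivial and the ℓ-th is not. (2) If H is not solvable, then G is not virtually solvable: G has no solvable subgroup of finite index. -/

import Mathlib

open Function

/-- The shift map on `ℤ → A`. -/
def shiftMap (A : Type*) : (ℤ → A) → (ℤ → A) := fun x i => x (i + 1)

/-- The shift map as a permutation of `ℤ → A`. -/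
def shiftPerm (A : Type*) : Equiv.Perm (ℤ → A) where
  toFun := shiftMap A
  invFun x i := x (i - 1)
  left_inv x := funext fun i => by simp [shiftMap]
  right_inv x := funext fun i => by simp [shiftMap]

/-- Finite types carry the discrete topology. -/
instance fintypeDiscreteTopology (A : Type*) [Fintype A] : TopologicalSpace A := ⊥

/-- The automorphism group of the full shift `A^ℤ`: shift-commuting self-homeomorphisms of
`ℤ → A`, as a subgroup of the permutation group of `ℤ → A`. -/
def FullShiftAut (A : Type*) [Fintype A] : Subgroup (Equiv.Perm (ℤ → A)) where
  carrier := { f | Continuous ⇑f ∧ Continuous ⇑f.symm ∧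
      ∀ x, f (shiftMap A x) = shiftMap A (f x) }
  one_mem' := ⟨continuous_id, continuous_id, fun _ => rfl⟩
  mul_mem' := by
    rintro f g ⟨hf1, hf2, hf3⟩ ⟨hg1, hg2, hg3⟩
    refine ⟨?_, ?_, fun x => ?_⟩
    · exact hf1.comp hg1
    · exact hg2.comp hf2
    · show f (g (shiftMap A x)) = shiftMap A (f (g x))
      rw [hg3, hf3]
  inv_mem' := by
    rintro f ⟨hf1, hf2, hf3⟩
    refine ⟨hf2, hf1, fun x => ?_⟩
    apply f.injective
    rw [Equiv.Perm.inv_def, Equiv.apply_symm_apply, hf3, Equiv.apply_symm_apply]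

/-- The symbol permutation determined by a permutation of the alphabet. -/
def symbolPerm {A : Type*} (π : Equiv.Perm A) : Equiv.Perm (ℤ → A) :=
  Equiv.piCongrRight fun _ => π

/-- The partial shift on the first track. -/
def partialShift₁ (B C : Type*) : Equiv.Perm (ℤ → B × C) where
  toFun x i := ((x (i + 1)).1, (x i).2)
  invFun x i := ((x (i - 1)).1, (x i).2)
  left_inv x := funext fun i => by simp
  right_inv x := funext fun i => by simp

/-- The partial shift on the second track. -/
def partialShift₂ (B C : Type*) : Equiv.Perm (ℤ → B × C) where
  toFun x i := ((x i).1, (x (i + 1)).2)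
  invFun x i := ((x i).1, (x (i - 1)).2)
  left_inv x := funext fun i => by simp
  right_inv x := funext fun i => by simp

/-- `PAut[B;C]`: the subgroup of the automorphism group of `(B × C)^ℤ` generated by the two
partial shifts and all symbol permutations. -/
def PAut (B C : Type*) : Subgroup (Equiv.Perm (ℤ → B × C)) :=
  Subgroup.closure
    ({partialShift₁ B C, partialShift₂ B C} ∪ Set.range (symbolPerm (A := B × C)))

attribute [local instance] Classical.propDecidable

/-- The shift on `(ℤ → B) × A`: `ŝ(x, a) = (σ x, a)`. -/
noncomputable def shiftFst (B A : Type*) : Equiv.Perm ((ℤ → B) × A) :=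
  (shiftPerm B).prodCongr (Equiv.refl A)

/-- The controlled action `ctrl(g, C')` on `(ℤ → B) × A`: apply `g` on the second coordinate
exactly when the first coordinate lies in `C'`. -/
noncomputable def ctrlFull {B : Type*} {G : Type*} [Group G] {A : Type*} [MulAction G A]
    (g : G) (C' : Set (ℤ → B)) : Equiv.Perm ((ℤ → B) × A) where
  toFun p := if p.1 ∈ C' then (p.1, g • p.2) else p
  invFun p := if p.1 ∈ C' then (p.1, g⁻¹ • p.2) else p
  left_inv := by rintro ⟨x, a⟩; by_cases h : x ∈ C' <;> simp [h]
  right_inv := by rintro ⟨x, a⟩; by_cases h : x ∈ C' <;> simp [h]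

/-- The group `P(ℤ → B, G)` (with `X = ℤ → B` the full shift): generated by the shift together
with the controlled maps `ctrl(g, C')` over basic cylinders `C'`. -/
noncomputable def PGroupFull (B : Type*) (G : Type*) [Group G] (A : Type*) [MulAction G A] :
    Subgroup (Equiv.Perm ((ℤ → B) × A)) :=
  Subgroup.closure
    ({shiftFst B A} ∪ {f | ∃ (g : G) (i : ℤ) (s : B), f = ctrlFull g {x : ℤ → B | x i = s}})

/-!
Every element of `P = P(ℤ → B, H)` is a skew product `(x, a) ↦ (σᵐ x, k_x a)` with all `k_x ∈ H`.
Since the bases `σᵐ` commute, `⁅P, P⁆` acts fibrewise, hence `P⁽ⁿ⁺¹⁾` acts on every fibre through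
`H⁽ⁿ⁾`. Conversely the commutator of the shift with `ctrl(g, {x | x 0 = b₀})` acts by `g` on every
fibre over the window `x (-1) = b₀, x 0 = b₁`, so every element of `H⁽ⁿ⁾` is realised on those
fibres by an element of `P⁽ⁿ⁺¹⁾`.

If `H` is not solvable it has a nontrivial perfect subgroup `Q`. As
`⁅ctrl(p, S), ctrl(q, T)⁆ = ctrl(⁅p, q⁆, S ∩ T)`, every `ctrl(q, Z)` with `q ∈ Q` and `Z` a cylinder
lies in `P`, and the `|B| ^ (n + 1)` disjoint cylinders over a window of length `n + 1` give an
embedding of `Q ^ (|B| ^ (n + 1))` into `P`. A solvable subgroup of `Q ^ ι` has index at least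
`2 ^ |ι|`, because each of its projections is a proper subgroup of `Q`; so a solvable subgroup of
`P` cannot have finite index.
-/

open scoped commutatorElement

namespace Subgroup

variable {G G' : Type*} [Group G] [Group G']

def iteratedCommutator (L : Subgroup G) (n : ℕ) : Subgroup G :=
  (fun S => ⁅S, S⁆)^[n] L

theorem iteratedCommutator_succ (L : Subgroup G) (n : ℕ) :
    L.iteratedCommutator (n + 1) = ⁅L.iteratedCommutator n, L.iteratedCommutator n⁆ :=
  iterate_succ_apply' _ n L

theorem iteratedCommutator_succ' (L : Subgroup G) (n : ℕ) :
    L.iteratedCommutator (n + 1) = (⁅L, L⁆ : Subgroup G).iteratedCommutator n :=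
  iterate_succ_apply _ n L

theorem iteratedCommutator_mono (n : ℕ) : Monotone fun L : Subgroup G => L.iteratedCommutator n :=
  Monotone.iterate (fun _ _ h => commutator_mono h h) n

theorem iteratedCommutator_eq_self {L : Subgroup G} (hL : ⁅L, L⁆ = L) (n : ℕ) :
    L.iteratedCommutator n = L :=
  iterate_fixed (f := fun S : Subgroup G => ⁅S, S⁆) hL n

theorem map_subtype_derivedSeries (L : Subgroup G) (n : ℕ) :
    (derivedSeries L n).map L.subtype = L.iteratedCommutator n := by
  induction n with
  | zero => rw [derivedSeries_zero, ← MonoidHom.range_eq_map, range_subtype]; rfl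
  | succ n ih => rw [derivedSeries_succ, map_commutator, ih, iteratedCommutator_succ]

theorem derivedSeries_eq_bot_iff (L : Subgroup G) (n : ℕ) :
    derivedSeries L n = ⊥ ↔ L.iteratedCommutator n = ⊥ := by
  rw [← map_subtype_derivedSeries, map_eq_bot_iff_of_injective _ L.subtype_injective]

theorem iteratedCommutator_le_of_commutator_le {F : Subgroup G → Subgroup G'}
    (hcomm : ∀ S, ⁅F S, F S⁆ ≤ F ⁅S, S⁆) (S : Subgroup G) (n : ℕ) :
    (F S).iteratedCommutator n ≤ F (S.iteratedCommutator n) := by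
  induction n with
  | zero => exact le_rfl
  | succ n ih =>
    rw [iteratedCommutator_succ, iteratedCommutator_succ]
    exact (commutator_mono ih ih).trans (hcomm _)

theorem not_isSolvable_of_commutator_eq_self {L : Subgroup G} (hL : ⁅L, L⁆ = L) (hne : L ≠ ⊥) :
    ¬ Group.IsSolvable L := fun ⟨n, hn⟩ =>
  hne <| by rwa [derivedSeries_eq_bot_iff, iteratedCommutator_eq_self hL] at hn

theorem exists_commutator_eq_self_ne_bot [Finite G] (hG : ¬ Group.IsSolvable G) :
    ∃ L : Subgroup G, ⁅L, L⁆ = L ∧ L ≠ ⊥ := by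
  rw [Group.isSolvable_iff_commutator_lt] at hG
  push Not at hG
  obtain ⟨L, hne, hL⟩ := hG
  exact ⟨L, (commutator_le_self L).eq_of_not_lt hL, hne⟩

theorem index_comap_le (f : G' →* G) {K : Subgroup G} (hK : K.index ≠ 0) :
    (K.comap f).index ≤ K.index := by
  rw [index_comap, ← relIndex_top_right]
  exact relIndex_le_of_le_right le_top (by rwa [relIndex_top_right])

theorem two_pow_card_le_index_of_isSolvable {ι : Type*} [Fintype ι] [Finite G]
    (hG : ¬ Group.IsSolvable G) (L : Subgroup (ι → G)) [Group.IsSolvable L] :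
    2 ^ Fintype.card ι ≤ L.index := by
  set S : ι → Subgroup G := fun i => L.map (Pi.evalMonoidHom (fun _ => G) i)
  have hS : ∀ i, 2 ≤ (S i).index := fun i => by
    have : Group.IsSolvable (S i) :=
      Group.isSolvable_of_surjective (MonoidHom.subgroupMap_surjective _ L)
    have hne : S i ≠ ⊤ := fun h =>
      hG (Group.isSolvable_of_surjective (f := (S i).subtype)
        (MonoidHom.range_eq_top.mp (by rw [range_subtype, h])))
    have := (S i).index_ne_zero_of_finite
    have := mt index_eq_one.mp hne
    omega
  have hLS : L ≤ pi Set.univ S := fun x hx i _ => mem_map_of_mem _ hx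
  calc 2 ^ Fintype.card ι = ∏ _i : ι, 2 := by simp
    _ ≤ ∏ i, (S i).index := Finset.prod_le_prod' fun i _ => hS i
    _ = (pi Set.univ S).index := (index_pi S).symm
    _ ≤ L.index := Nat.le_of_dvd (Nat.pos_of_ne_zero L.index_ne_zero_of_finite)
        (index_dvd_of_le hLS)

theorem not_isSolvable_of_index_ne_zero {Q : Type*} [Group Q] [Finite Q]
    (hQ : ¬ Group.IsSolvable Q)
    (hembed : ∀ n : ℕ, ∃ (ι : Type) (_ : Fintype ι) (φ : (ι → Q) →* G),
      n < Fintype.card ι ∧ Injective φ)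
    (K : Subgroup G) (hK : K.index ≠ 0) : ¬ Group.IsSolvable K := by
  intro hsolv
  obtain ⟨ι, _, φ, hcard, hφ⟩ := hembed K.index
  have : Group.IsSolvable (K.comap φ) :=
    Group.isSolvable_of_isSolvable_injective (f := φ.subgroupComap K)
      fun a b h => Subtype.ext (hφ (congrArg Subtype.val h))
  have := (two_pow_card_le_index_of_isSolvable hQ (K.comap φ)).trans (index_comap_le φ hK)
  have := Nat.lt_two_pow_self (n := Fintype.card ι)
  omega

end Subgroup

section SkewProducts

open Equiv

variable {X C : Type*}

def MapsFiber (u : Perm (X × C)) (x y : X) (k : Perm C) : Prop :=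
  ∀ a, u (x, a) = (y, k a)

namespace MapsFiber

variable {u v : Perm (X × C)} {x y z : X} {k l : Perm C}

theorem one (x : X) : MapsFiber (1 : Perm (X × C)) x x 1 := fun _ => rfl

theorem mul (hu : MapsFiber u y z k) (hv : MapsFiber v x y l) : MapsFiber (u * v) x z (k * l) :=
  fun a => by rw [Perm.mul_apply, hv, hu]; rfl

theorem inv (hu : MapsFiber u x y k) : MapsFiber u⁻¹ y x k⁻¹ := fun a => by
  rw [Perm.inv_eq_iff_eq, hu]
  simp

theorem commutator (hu : MapsFiber u x x k) (hv : MapsFiber v x x l) :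
    MapsFiber ⁅u, v⁆ x x ⁅k, l⁆ :=
  ((hu.mul hv).mul hu.inv).mul hv.inv

theorem eq_one_of_one (h : MapsFiber (1 : Perm (X × C)) x x k) : k = 1 :=
  Equiv.ext fun a => (Prod.ext_iff.mp (h a)).2.symm

end MapsFiber

def IsSkewProduct (K : Subgroup (Perm C)) (e : Perm X) (u : Perm (X × C)) : Prop :=
  ∀ x, ∃ k ∈ K, MapsFiber u x (e x) k

namespace IsSkewProduct

variable {K : Subgroup (Perm C)} {e f : Perm X} {u v : Perm (X × C)}

theorem one : IsSkewProduct K 1 (1 : Perm (X × C)) := fun x => ⟨1, K.one_mem, MapsFiber.one x⟩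

theorem mul (hu : IsSkewProduct K e u) (hv : IsSkewProduct K f v) :
    IsSkewProduct K (e * f) (u * v) := fun x => by
  obtain ⟨l, hl, hvx⟩ := hv x
  obtain ⟨k, hk, hux⟩ := hu (f x)
  exact ⟨k * l, K.mul_mem hk hl, hux.mul hvx⟩

theorem inv (hu : IsSkewProduct K e u) : IsSkewProduct K e⁻¹ u⁻¹ := fun y => by
  obtain ⟨k, hk, hux⟩ := hu (e⁻¹ y)
  rw [show e (e⁻¹ y) = y from e.apply_symm_apply y] at hux
  exact ⟨k⁻¹, K.inv_mem hk, hux.inv⟩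

theorem commutator (hu : IsSkewProduct K e u) (hv : IsSkewProduct K f v) :
    IsSkewProduct K ⁅e, f⁆ ⁅u, v⁆ :=
  ((hu.mul hv).mul hu.inv).mul hv.inv

end IsSkewProduct

def skewProducts (K : Subgroup (Perm C)) (E : Subgroup (Perm X)) : Subgroup (Perm (X × C)) where
  carrier := {u | ∃ e ∈ E, IsSkewProduct K e u}
  one_mem' := ⟨1, E.one_mem, IsSkewProduct.one⟩
  mul_mem' := fun ⟨e, he, hu⟩ ⟨f, hf, hv⟩ => ⟨e * f, E.mul_mem he hf, hu.mul hv⟩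
  inv_mem' := fun ⟨e, he, hu⟩ => ⟨e⁻¹, E.inv_mem he, hu.inv⟩

theorem mem_skewProducts_bot {K : Subgroup (Perm C)} {u : Perm (X × C)} :
    u ∈ skewProducts K ⊥ ↔ ∀ x, ∃ k ∈ K, MapsFiber u x x k := by
  simp [skewProducts, IsSkewProduct]

theorem commutator_skewProducts_le (K : Subgroup (Perm C)) (E : Subgroup (Perm X)) :
    ⁅skewProducts K E, skewProducts K E⁆ ≤ skewProducts K ⁅E, E⁆ := by
  rw [Subgroup.commutator_le]
  rintro u ⟨e, he, hu⟩ v ⟨f, hf, hv⟩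
  exact ⟨⁅e, f⁆, Subgroup.commutator_mem_commutator he hf, hu.commutator hv⟩

theorem commutator_skewProducts_bot_le (X : Type*) (K : Subgroup (Perm C)) :
    ⁅skewProducts K (⊥ : Subgroup (Perm X)), skewProducts K ⊥⁆ ≤
      skewProducts ⁅K, K⁆ (⊥ : Subgroup (Perm X)) := by
  rw [Subgroup.commutator_le]
  intro u hu v hv
  rw [mem_skewProducts_bot] at hu hv ⊢
  intro x
  obtain ⟨k, hk, hux⟩ := hu x
  obtain ⟨l, hl, hvx⟩ := hv x
  exact ⟨⁅k, l⁆, Subgroup.commutator_mem_commutator hk hl, hux.commutator hvx⟩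

theorem skewProducts_bot_bot :
    skewProducts (⊥ : Subgroup (Perm C)) (⊥ : Subgroup (Perm X)) = ⊥ := by
  refine eq_bot_iff.mpr fun u hu => ?_
  rw [mem_skewProducts_bot] at hu
  refine Subgroup.mem_bot.mpr (Equiv.ext fun ⟨x, a⟩ => ?_)
  obtain ⟨k, hk, hux⟩ := hu x
  rw [Subgroup.mem_bot.mp hk] at hux
  exact hux a

def fiberAction (L : Subgroup (Perm (X × C))) (W : Set X) : Subgroup (Perm C) where
  carrier := {k | ∃ u ∈ L, ∀ x ∈ W, MapsFiber u x x k}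
  one_mem' := ⟨1, L.one_mem, fun x _ => MapsFiber.one x⟩
  mul_mem' := by
    rintro k l ⟨u, hu, hux⟩ ⟨v, hv, hvx⟩
    exact ⟨u * v, L.mul_mem hu hv, fun x hx => (hux x hx).mul (hvx x hx)⟩
  inv_mem' := by
    rintro k ⟨u, hu, hux⟩
    exact ⟨u⁻¹, L.inv_mem hu, fun x hx => (hux x hx).inv⟩

theorem commutator_fiberAction_le (L : Subgroup (Perm (X × C))) (W : Set X) :
    ⁅fiberAction L W, fiberAction L W⁆ ≤ fiberAction ⁅L, L⁆ W := by
  rw [Subgroup.commutator_le]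
  rintro k ⟨u, hu, hux⟩ l ⟨v, hv, hvx⟩
  exact ⟨⁅u, v⁆, Subgroup.commutator_mem_commutator hu hv,
    fun x hx => (hux x hx).commutator (hvx x hx)⟩

theorem fiberAction_bot {X : Type*} (C : Type*) {W : Set X} (hW : W.Nonempty) :
    fiberAction (⊥ : Subgroup (Perm (X × C))) W = ⊥ := by
  refine eq_bot_iff.mpr fun k ⟨u, hu, hux⟩ => ?_
  obtain ⟨x, hx⟩ := hW
  rw [Subgroup.mem_bot.mp hu] at hux
  exact Subgroup.mem_bot.mpr (hux x hx).eq_one_of_one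

end SkewProducts

section FullShift

open Equiv Subgroup

variable {B C : Type*}

theorem mapsFiber_shiftFst (x : ℤ → B) : MapsFiber (shiftFst B C) x (shiftPerm B x) 1 :=
  fun _ => rfl

theorem mapsFiber_ctrlFull_of_mem {H : Subgroup (Perm C)} (g : H) {S : Set (ℤ → B)}
    {x : ℤ → B} (hx : x ∈ S) : MapsFiber (ctrlFull (A := C) g S) x x g := fun a => by
  simp [ctrlFull, hx, Subgroup.smul_def, Perm.smul_def]

theorem mapsFiber_ctrlFull_of_notMem {H : Subgroup (Perm C)} (g : H) {S : Set (ℤ → B)}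
    {x : ℤ → B} (hx : x ∉ S) : MapsFiber (ctrlFull (A := C) g S) x x 1 := fun a => by
  simp [ctrlFull, hx]

theorem PGroupFull_le_skewProducts (H : Subgroup (Perm C)) :
    PGroupFull B H C ≤ skewProducts H (zpowers (shiftPerm B)) := by
  rw [PGroupFull, closure_le]
  rintro u (rfl | ⟨g, i, s, rfl⟩)
  · exact ⟨shiftPerm B, mem_zpowers _, fun x => ⟨1, H.one_mem, mapsFiber_shiftFst x⟩⟩
  · refine ⟨1, one_mem _, fun x => ?_⟩
    by_cases hx : x i = s
    · exact ⟨g, g.2, mapsFiber_ctrlFull_of_mem g hx⟩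
    · exact ⟨1, H.one_mem, mapsFiber_ctrlFull_of_notMem g hx⟩

/-- All bases of elements of `P(ℤ → B, H)` are powers of the shift, and these commute. -/
theorem commutator_PGroupFull_le (H : Subgroup (Perm C)) :
    ⁅PGroupFull B H C, PGroupFull B H C⁆ ≤ skewProducts H ⊥ := by
  have hE : ⁅zpowers (shiftPerm B), zpowers (shiftPerm B)⁆ = ⊥ :=
    commutator_self_eq_bot_iff.mpr inferInstance
  calc ⁅PGroupFull B H C, PGroupFull B H C⁆
      ≤ ⁅skewProducts H (zpowers (shiftPerm B)), skewProducts H (zpowers (shiftPerm B))⁆ :=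
        commutator_mono (PGroupFull_le_skewProducts H) (PGroupFull_le_skewProducts H)
    _ ≤ skewProducts H ⊥ := hE ▸ commutator_skewProducts_le H _

theorem iteratedCommutator_PGroupFull_le (H : Subgroup (Perm C)) (n : ℕ) :
    (PGroupFull B H C).iteratedCommutator (n + 1) ≤
      skewProducts (H.iteratedCommutator n) (⊥ : Subgroup (Perm (ℤ → B))) := by
  rw [iteratedCommutator_succ']
  exact (iteratedCommutator_mono n (commutator_PGroupFull_le H)).trans
    (iteratedCommutator_le_of_commutator_le (F := fun K => skewProducts K ⊥)
      (commutator_skewProducts_bot_le _) H n)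

/-- The commutator of the shift with `ctrl(g, {x | x 0 = b₀})` acts by `g` on every fibre over
the window `x (-1) = b₀, x 0 = b₁`. -/
theorem le_fiberAction_commutator_PGroupFull (H : Subgroup (Perm C)) {b₀ b₁ : B}
    (hb : b₀ ≠ b₁) :
    H ≤ fiberAction ⁅PGroupFull B H C, PGroupFull B H C⁆ {x | x (-1) = b₀ ∧ x 0 = b₁} := by
  intro k hk
  set g : H := ⟨k, hk⟩
  set c := ctrlFull (A := C) g {x : ℤ → B | x 0 = b₀}
  refine ⟨⁅shiftFst B C, c⁆, commutator_mem_commutator (subset_closure (Or.inl rfl))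
    (subset_closure (Or.inr ⟨g, 0, b₀, rfl⟩)), fun x ⟨hx₀, hx₁⟩ => ?_⟩
  set x' := (shiftPerm B).symm x
  have hsx' : MapsFiber (shiftFst B C) x' x 1 := by
    simpa [x'] using mapsFiber_shiftFst (C := C) x'
  have hcx' : MapsFiber c x' x' k :=
    mapsFiber_ctrlFull_of_mem g (show x (0 - 1) = b₀ from hx₀)
  have hcx : MapsFiber c x x 1 :=
    mapsFiber_ctrlFull_of_notMem g (show x 0 ≠ b₀ from hx₁ ▸ hb.symm)
  rw [commutatorElement_def]
  simpa using ((hsx'.mul hcx').mul hsx'.inv).mul hcx.inv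

theorem iteratedCommutator_le_fiberAction (H : Subgroup (Perm C)) {b₀ b₁ : B} (hb : b₀ ≠ b₁)
    (n : ℕ) :
    H.iteratedCommutator n ≤
      fiberAction ((PGroupFull B H C).iteratedCommutator (n + 1))
        {x | x (-1) = b₀ ∧ x 0 = b₁} := by
  rw [iteratedCommutator_succ']
  exact (iteratedCommutator_mono n (le_fiberAction_commutator_PGroupFull H hb)).trans
    (iteratedCommutator_le_of_commutator_le (commutator_fiberAction_le · _) _ n)

theorem derivedSeries_PGroupFull_succ_eq_bot_iff [Nontrivial B] (H : Subgroup (Perm C))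
    (n : ℕ) : derivedSeries (PGroupFull B H C) (n + 1) = ⊥ ↔ derivedSeries H n = ⊥ := by
  obtain ⟨b₀, b₁, hb⟩ := exists_pair_ne B
  rw [derivedSeries_eq_bot_iff, derivedSeries_eq_bot_iff]
  constructor
  · intro hP
    have hW : ({x | x (-1) = b₀ ∧ x 0 = b₁} : Set (ℤ → B)).Nonempty :=
      ⟨fun i => if i = 0 then b₁ else b₀, by simp⟩
    have := iteratedCommutator_le_fiberAction H hb n
    rwa [hP, fiberAction_bot C hW, le_bot_iff] at this
  · intro hH
    have := iteratedCommutator_PGroupFull_le (B := B) H n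
    rwa [hH, skewProducts_bot_bot, le_bot_iff] at this

end FullShift

section ControlledMaps

open Equiv Subgroup

variable {B G A : Type*} [Group G] [MulAction G A]

def fiberSMulHom (X G A : Type*) [Group G] [MulAction G A] : (X → G) →* Perm (X × A) where
  toFun φ := (Equiv.refl X).prodShear fun x => MulAction.toPerm (φ x)
  map_one' := by ext <;> simp
  map_mul' φ ψ := by ext <;> simp [mul_smul]

@[simp]
theorem fiberSMulHom_apply {X : Type*} (φ : X → G) (p : X × A) :
    fiberSMulHom X G A φ p = (p.1, φ p.1 • p.2) :=
  rfl

theorem fiberSMulHom_injective (X : Type*) [FaithfulSMul G A] :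
    Injective (fiberSMulHom X G A) := by
  refine (injective_iff_map_eq_one _).mpr fun φ hφ => funext fun x => ?_
  refine eq_of_smul_eq_smul (α := A) fun a => ?_
  simpa using congrArg Prod.snd (Perm.ext_iff.mp hφ (x, a))

theorem ctrlFull_mul (g h : G) (S : Set (ℤ → B)) :
    ctrlFull (A := A) g S * ctrlFull h S = ctrlFull (g * h) S := by
  ext ⟨x, a⟩ <;> by_cases hx : x ∈ S <;> simp [ctrlFull, hx, mul_smul]

theorem commutator_ctrlFull (g h : G) (S T : Set (ℤ → B)) :
    ⁅ctrlFull (A := A) g S, ctrlFull (A := A) h T⁆ = ctrlFull (A := A) ⁅g, h⁆ (S ∩ T) := by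
  ext ⟨x, a⟩ <;> by_cases hS : x ∈ S <;> by_cases hT : x ∈ T <;>
    simp [commutatorElement_def, ctrlFull, hS, hT, mul_smul]

variable (A) in
noncomputable def ctrlHom (S : Set (ℤ → B)) : G →* Perm ((ℤ → B) × A) where
  toFun g := ctrlFull g S
  map_one' := by ext <;> simp [ctrlFull]
  map_mul' g h := (ctrlFull_mul g h S).symm

theorem le_comap_ctrlHom_inter {Q : Subgroup G} (hQ : ⁅Q, Q⁆ = Q) {S T : Set (ℤ → B)}
    (hS : Q ≤ (PGroupFull B G A).comap (ctrlHom A S))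
    (hT : Q ≤ (PGroupFull B G A).comap (ctrlHom A T)) :
    Q ≤ (PGroupFull B G A).comap (ctrlHom A (S ∩ T)) := by
  rw [← hQ, commutator_le]
  intro p hp q hq
  change ctrlFull ⁅p, q⁆ (S ∩ T) ∈ PGroupFull B G A
  rw [← commutator_ctrlFull]
  exact commutator_le_self _ (commutator_mem_commutator (hS hp) (hT hq))

theorem ctrlFull_cylinder_mem_PGroupFull {Q : Subgroup G} (hQ : ⁅Q, Q⁆ = Q) {n : ℕ}
    (c : Fin (n + 1) → ℤ) (w : Fin (n + 1) → B) :
    Q ≤ (PGroupFull B G A).comap (ctrlHom A {x | ∀ j, x (c j) = w j}) := by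
  induction n with
  | zero =>
    have hcyl : {x : ℤ → B | ∀ j, x (c j) = w j} = {x | x (c 0) = w 0} := by
      simp [Fin.forall_fin_one]
    rw [hcyl]
    exact fun g _ => subset_closure (Or.inr ⟨g, c 0, w 0, rfl⟩)
  | succ n ih =>
    simp only [Fin.forall_fin_succ (n := n + 1), Set.ofPred_and]
    exact le_comap_ctrlHom_inter hQ (fun g _ => subset_closure (Or.inr ⟨g, c 0, w 0, rfl⟩))
      (ih (c ∘ Fin.succ) (w ∘ Fin.succ))

/-- `f` acts by `(x, a) ↦ (x, f (x ∘ c) • a)`, the product of the controls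
`ctrl(f w, {x | x ∘ c = w})` over all words `w`. -/
theorem exists_injective_pi_PGroupFull [Finite B] [FaithfulSMul G A] {Q : Subgroup G}
    (hQ : ⁅Q, Q⁆ = Q) {n : ℕ} {c : Fin (n + 1) → ℤ} (hc : Injective c) :
    ∃ φ : ((Fin (n + 1) → B) → Q) →* PGroupFull B G A, Injective φ := by
  let φ := (fiberSMulHom (ℤ → B) G A).comp
    (MonoidHom.pi fun x => Q.subtype.comp (Pi.evalMonoidHom (fun _ => Q) (x ∘ c)))
  have hφ_single (w : Fin (n + 1) → B) (q : Q) :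
      φ (Pi.mulSingle w q) = ctrlHom A {x | ∀ j, x (c j) = w j} q := by
    ext ⟨x, a⟩ <;> by_cases hx : ∀ j, x (c j) = w j <;>
      simp [φ, ctrlHom, ctrlFull, Pi.mulSingle_apply, funext_iff, hx, Subgroup.smul_def]
  have hφ_mem (f) : φ f ∈ PGroupFull B G A :=
    pi_mem_of_mulSingle_mem (H := (PGroupFull B G A).comap φ) f fun w => by
      rw [mem_comap, hφ_single]
      exact ctrlFull_cylinder_mem_PGroupFull hQ c w (f w).2
  refine ⟨φ.codRestrict _ hφ_mem, fun f f' h => funext fun w => ?_⟩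
  obtain ⟨x, rfl⟩ := hc.surjective_comp_right' (fun _ => w 0) w
  exact Subtype.ext (congrFun (fiberSMulHom_injective (A := A) _ (congrArg Subtype.val h)) x)

end ControlledMaps

/-- for `G = P((ℤ → B), H)` with `H ≤ Perm C`: (1) if `H` has derived length
`ℓ` then `G` has derived length `ℓ + 1`; (2) if `H` is not solvable then `G` has no solvable
subgroup of finite index. -/
theorem stmt17 (B C : Type) [Fintype B] [Fintype C] (hB : 2 ≤ Fintype.card B)
    (H : Subgroup (Equiv.Perm C)) :
    (∀ ℓ : ℕ, derivedSeries ↥H ℓ = ⊥ → derivedSeries ↥H (ℓ - 1) ≠ ⊥ →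
      derivedSeries ↥(PGroupFull B ↥H C) (ℓ + 1) = ⊥ ∧
        derivedSeries ↥(PGroupFull B ↥H C) ℓ ≠ ⊥) ∧
    (¬ IsSolvable ↥H →
      ∀ K : Subgroup ↥(PGroupFull B ↥H C), K.index ≠ 0 → ¬ IsSolvable ↥K) := by
  have : Nontrivial B := Fintype.one_lt_card_iff_nontrivial.mp hB
  refine ⟨fun ℓ hℓ hℓ' => ?_, fun hH => ?_⟩
  · obtain _ | m := ℓ
    · exact absurd hℓ hℓ'
    · exact ⟨(derivedSeries_PGroupFull_succ_eq_bot_iff H _).mpr hℓ,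
        mt (derivedSeries_PGroupFull_succ_eq_bot_iff H m).mp hℓ'⟩
  · obtain ⟨Q, hQ, hQne⟩ := Subgroup.exists_commutator_eq_self_ne_bot hH
    refine Subgroup.not_isSolvable_of_index_ne_zero
      (Subgroup.not_isSolvable_of_commutator_eq_self hQ hQne) fun n => ?_
    obtain ⟨φ, hφ⟩ := exists_injective_pi_PGroupFull (B := B) (A := C) hQ
      (c := fun j : Fin (n + 1) => (j : ℤ)) fun i j h => Fin.ext (by simpa using h)
    refine ⟨Fin (n + 1) → B, inferInstance, φ, ?_, hφ⟩
    rw [Fintype.card_fun, Fintype.card_fin]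
    calc n < 2 ^ (n + 1) := (Nat.lt_succ_self n).trans Nat.lt_two_pow_self
      _ ≤ Fintype.card B ^ (n + 1) := Nat.pow_le_pow_left hB _
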